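/- Let P = B ∪ R be a doubly collinear point set with |B| = |R| = n ≥ 1. Then there exists a bichromatic perfect non-crossing matching M of P that minimizes the maximum edge length among all bichromatic perfect non-crossing matchings of P and has the following form: for each of the four half-lines h, the set of points of P ∩ h whose matching edge in M lies in a small sector is consecutive in the ordering of P ∩ h by distance to x. -/

import Mathlib

noncomputable section

open scoped InnerProductSpace

/-- The Euclidean plane. -/
abbrev Pt : Type := EuclideanSpace ℝ (Fin 2)

/-- The determinant of two plane vectors (twice the signed area). -/
def det2 (u v : Pt) : ℝ := u 0 * v 1 - u 1 * v 0

/-- The open half-line starting at `x` with direction `u`. -/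
def halfLine (x u : Pt) : Set Pt := {y | ∃ t : ℝ, 0 < t ∧ y = x + t • u}

/-- The open half-line starting at `a` and passing through `c` (it contains `c`). -/
def rayThrough (a c : Pt) : Set Pt := {y | ∃ s : ℝ, 0 < s ∧ y = a + s • (c - a)}

/-- `σ` encodes a bichromatic perfect non-crossing matching of the blue points `B` and the red
points `R`: it restricts to a bijection from `R` onto `B`, and the closed segments induced by
two distinct edges are disjoint. -/
def IsBM (B R : Finset Pt) (σ : Pt → Pt) : Prop :=
  Set.BijOn σ (↑R) (↑B) ∧
  (∀ r ∈ R, ∀ r' ∈ R, r ≠ r' →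
    segment ℝ r (σ r) ∩ segment ℝ r' (σ r') = ∅)

/-- The bichromatic edge `{r, b}` is feasible: some bichromatic perfect non-crossing matching
of `B ∪ R` contains it. -/
def BFeasible (B R : Finset Pt) (r b : Pt) : Prop :=
  ∃ σ, IsBM B R σ ∧ σ r = b

/-- The subset `S` of `P ∩ h` is consecutive in the ordering of `P ∩ h` by distance to `x`:
every point of `P ∩ h` lying (in that ordering) between two points of `S` belongs to `S`. -/
def ConsecOn (x : Pt) (P h S : Set Pt) : Prop :=
  ∀ a ∈ S, ∀ c ∈ S, ∀ p ∈ P ∩ h, dist x a ≤ dist x p → dist x p ≤ dist x c → p ∈ S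

/-- The edge `{b, r}` lies in a small (acute) sector determined by the two lines through `x`
with directions `u` (blue) and `v` (red). -/
def InSmallSector (x u v b r : Pt) : Prop :=
  ∃ ε δ : ℝ, (ε = 1 ∨ ε = -1) ∧ (δ = 1 ∨ δ = -1) ∧
    0 < ⟪ε • u, δ • v⟫_ℝ ∧ b ∈ halfLine x (ε • u) ∧ r ∈ halfLine x (δ • v)

/-- The edge `{b, r}` lies in a big (non-acute) sector determined by the two lines through `x`
with directions `u` (blue) and `v` (red). -/
def InBigSector (x u v b r : Pt) : Prop :=
  ∃ ε δ : ℝ, (ε = 1 ∨ ε = -1) ∧ (δ = 1 ∨ δ = -1) ∧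
    ⟪ε • u, δ • v⟫_ℝ ≤ 0 ∧ b ∈ halfLine x (ε • u) ∧ r ∈ halfLine x (δ • v)

/-- The matching edge of the point `p` in the matching `σ` lies in a small sector. -/
def MatchedSmall (x u v : Pt) (R : Finset Pt) (σ : Pt → Pt) (p : Pt) : Prop :=
  ∃ r ∈ R, (p = r ∨ p = σ r) ∧ InSmallSector x u v (σ r) r

/-- The matching edge of the point `p` in the matching `σ` lies in a big sector. -/
def MatchedBig (x u v : Pt) (R : Finset Pt) (σ : Pt → Pt) (p : Pt) : Prop :=
  ∃ r ∈ R, (p = r ∨ p = σ r) ∧ InBigSector x u v (σ r) r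

/-- `q` is the matching partner of `p` in the matching `σ` (which maps red points to blue
points). -/
def IsPartner (R : Finset Pt) (σ : Pt → Pt) (p q : Pt) : Prop :=
  (p ∈ R ∧ q = σ p) ∨ (q ∈ R ∧ σ q = p)


/-!
Choose a non-crossing matching that minimises the maximum edge length and, among those, the sum
of the squared edge lengths. Suppose a point of a blue half-line matched into a big sector lies
between two points matched into small sectors. Walking away from `x`, some point matched small is
then immediately followed by a point matched big, and a point matched small lies further out.
Exchanging the red partners of these two adjacent points keeps the matching non-crossing, does not
increase the maximum edge length (the new small edge is dominated by one of the three old edges)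
and strictly decreases the sum of squares: a contradiction. Red half-lines are handled by
exchanging the colours.
-/

open Function

theorem Finset.exists_adjacent_change {ι α : Type*} [LinearOrder α] (S : Finset ι) (f : ι → α)
    (P : ι → Prop) {a p : ι} (ha : a ∈ S) (hp : p ∈ S) (hPa : P a) (hPp : ¬ P p)
    (hap : f a < f p) :
    ∃ i ∈ S, ∃ j ∈ S, P i ∧ ¬ P j ∧ f i < f j ∧ f j ≤ f p ∧ ∀ k ∈ S, f i < f k → f j ≤ f k := by
  classical
  obtain ⟨i, hi, himax⟩ := (S.filter fun k => P k ∧ f k < f p).exists_max_image f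
    ⟨a, by simp [ha, hPa, hap]⟩
  simp only [Finset.mem_filter] at hi himax
  obtain ⟨j, hj, hjmin⟩ := (S.filter fun k => f i < f k ∧ f k ≤ f p ∧ ¬ P k).exists_min_image f
    ⟨p, by simp [hp, hi.2.2, hPp]⟩
  simp only [Finset.mem_filter] at hj hjmin
  refine ⟨i, hi.1, j, hj.1, hi.2.1, hj.2.2.2, hj.2.1, hj.2.2.1, fun k hk hik => ?_⟩
  by_contra! hkj
  have hkp : f k < f p := hkj.trans_le hj.2.2.1
  by_cases hPk : P k
  · exact (himax k ⟨hk, hPk, hkp⟩).not_gt hik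
  · exact (hjmin k ⟨hk, hik, hkp.le, hPk⟩).not_gt hkj

theorem Set.Pairwise.of_eq_off_pair {ι α : Type*} {S : Set ι} {rel : α → α → Prop}
    (hsymm : ∀ a b, rel a b → rel b a) {f g : ι → α} {i j : ι} (hf : S.Pairwise (rel on f))
    (hg : ∀ k, k ≠ i → k ≠ j → g k = f k) (hij : rel (g i) (g j))
    (hi : ∀ k ∈ S, k ≠ i → k ≠ j → rel (g i) (f k))
    (hj : ∀ k ∈ S, k ≠ i → k ≠ j → rel (g j) (f k)) :
    S.Pairwise (rel on g) := by
  have key : ∀ a ∈ S, ∀ b ∈ S, a ≠ b → (a = i ∨ a = j) → rel (g a) (g b) := by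
    rintro a - b hb hab (rfl | rfl)
    · by_cases hbj : b = j
      · exact hbj ▸ hij
      · exact hg b hab.symm hbj ▸ hi b hb hab.symm hbj
    · by_cases hbi : b = i
      · exact hbi ▸ hsymm _ _ hij
      · exact hg b hbi hab.symm ▸ hj b hb hbi hab.symm
  intro a ha b hb hab
  by_cases ha' : a = i ∨ a = j
  · exact key a ha b hb hab ha'
  by_cases hb' : b = i ∨ b = j
  · exact hsymm _ _ (key b hb a ha hab.symm hb')
  rw [not_or] at ha' hb'
  simpa only [onFun, hg a ha'.1 ha'.2, hg b hb'.1 hb'.2] using hf ha hb hab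

theorem eq_of_abs_eq_of_mul_pos {s s' : ℝ} (h : 0 < s * s') (he : |s| = |s'|) : s = s' := by
  rcases mul_pos_iff.1 h with ⟨hs, hs'⟩ | ⟨hs, hs'⟩
  · rwa [abs_of_pos hs, abs_of_pos hs'] at he
  · rw [abs_of_neg hs, abs_of_neg hs'] at he
    linarith

theorem mul_eq_mul_iff_abs_of_mul_pos {s s' l m : ℝ} (h : 0 < s * s') :
    l * s = m * s' ↔ l * |s| = m * |s'| := by
  rcases mul_pos_iff.1 h with ⟨hs, hs'⟩ | ⟨hs, hs'⟩
  · rw [abs_of_pos hs, abs_of_pos hs']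
  · rw [abs_of_neg hs, abs_of_neg hs']
    constructor <;> intro h <;> linarith

/-- `e = (s, t)` encodes the segment from the red point `x + t • v` to the blue point `x + s • u`,
whose point of parameter `l ∈ [0, 1]` is `x + (l * s) • u + ((1 - l) * t) • v`. -/
def SegmentsMeet (e f : ℝ × ℝ) : Prop :=
  ∃ l ∈ Set.Icc (0 : ℝ) 1, ∃ m ∈ Set.Icc (0 : ℝ) 1,
    l * e.1 = m * f.1 ∧ (1 - l) * e.2 = (1 - m) * f.2

/-- The combinatorial form of disjointness: distinct endpoints, and two segments in the same
sector are nested. -/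
def Noncrossing (e f : ℝ × ℝ) : Prop :=
  e.1 ≠ f.1 ∧ e.2 ≠ f.2 ∧ (0 < e.1 * f.1 → 0 < e.2 * f.2 → (|e.1| < |f.1| ↔ |e.2| < |f.2|))

theorem Noncrossing.symm {e f : ℝ × ℝ} (h : Noncrossing e f) : Noncrossing f e := by
  refine ⟨h.1.symm, h.2.1.symm, fun h₁ h₂ => ?_⟩
  rw [mul_comm] at h₁ h₂
  have hord := h.2.2 h₁ h₂
  have hne₁ : |f.1| ≠ |e.1| := fun he => h.1 (eq_of_abs_eq_of_mul_pos h₁ he.symm)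
  have hne₂ : |f.2| ≠ |e.2| := fun he => h.2.1 (eq_of_abs_eq_of_mul_pos h₂ he.symm)
  constructor <;> intro h₃
  · exact lt_of_le_of_ne (not_lt.1 fun h₄ => lt_asymm h₃ (hord.2 h₄)) hne₂
  · exact lt_of_le_of_ne (not_lt.1 fun h₄ => lt_asymm h₃ (hord.1 h₄)) hne₁

theorem SegmentsMeet.symm {e f : ℝ × ℝ} (h : SegmentsMeet e f) : SegmentsMeet f e :=
  let ⟨l, hl, m, hm, h₁, h₂⟩ := h
  ⟨m, hm, l, hl, h₁.symm, h₂.symm⟩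

theorem segmentsMeet_of_abs_lt {s t s' t' : ℝ} (hs : 0 < s * s') (ht : 0 < t * t')
    (hlt : |s| < |s'|) (hgt : |t'| < |t|) : SegmentsMeet (s, t) (s', t') := by
  have hs₀ : 0 < |s| := abs_pos.2 (left_ne_zero_of_mul hs.ne')
  have ht₀ : 0 < |t'| := abs_pos.2 (right_ne_zero_of_mul ht.ne')
  have hD : 0 < |s'| * |t| - |s| * |t'| := by nlinarith
  refine ⟨|s'| * (|t| - |t'|) / (|s'| * |t| - |s| * |t'|), ⟨by positivity, ?_⟩,
    |s| * (|t| - |t'|) / (|s'| * |t| - |s| * |t'|), ⟨by positivity, ?_⟩, ?_, ?_⟩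
  · rw [div_le_one hD]; nlinarith
  · rw [div_le_one hD]; nlinarith
  · rw [mul_eq_mul_iff_abs_of_mul_pos hs]; field_simp
  · rw [mul_eq_mul_iff_abs_of_mul_pos ht, one_sub_div hD.ne', one_sub_div hD.ne',
      div_mul_eq_mul_div, div_mul_eq_mul_div, div_left_inj' hD.ne']
    ring

theorem lt_of_lt_of_mul_eq_mul {l m a a' d d' : ℝ} (hl : 0 < l) (hm : m < 1) (ha : 0 ≤ a)
    (hd : 0 < d) (h₁ : l * a = m * a') (h₂ : (1 - l) * d = (1 - m) * d') (hlt : a < a') :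
    d' < d := by
  have hml : m < l := by
    by_contra! hlm
    nlinarith [mul_le_mul_of_nonneg_right hlm (ha.trans hlt.le), mul_lt_mul_of_pos_left hlt hl]
  by_contra! hdd
  nlinarith [mul_le_mul_of_nonneg_left hdd (sub_pos.2 hm).le, mul_lt_mul_of_pos_right hml hd]

theorem Noncrossing.not_segmentsMeet {s t s' t' : ℝ} (hs : s ≠ 0) (hs' : s' ≠ 0) (ht : t ≠ 0)
    (ht' : t' ≠ 0) (h : Noncrossing (s, t) (s', t')) : ¬ SegmentsMeet (s, t) (s', t') := by
  obtain ⟨hss, htt, hord⟩ := h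
  rintro ⟨l, ⟨hl₀, hl₁⟩, m, ⟨hm₀, hm₁⟩, h₁, h₂⟩
  dsimp only at h₁ h₂ hss htt hord
  rcases hl₀.eq_or_lt with rfl | hl₀
  · obtain rfl : m = 0 := by simpa [hs'] using h₁.symm
    exact htt (by simpa using h₂)
  rcases hl₁.eq_or_lt with rfl | hl₁
  · obtain rfl : m = 1 := by
      have : (1 - m) * t' = 0 := by simpa using h₂.symm
      linarith [(mul_eq_zero.1 this).resolve_right ht']
    exact hss (by simpa using h₁)
  have hm₀ : 0 < m := hm₀.lt_of_ne (by rintro rfl; simp_all)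
  have hm₁ : m < 1 := hm₁.lt_of_ne (by rintro rfl; simp_all [sub_eq_zero])
  have hss' : 0 < s * s' := by
    refine pos_of_mul_pos_right (a := l * m) ?_ (by positivity)
    rw [show l * m * (s * s') = (m * s') * (m * s') by linear_combination (m * s') * h₁]
    exact mul_self_pos.2 (mul_ne_zero hm₀.ne' hs')
  have htt' : 0 < t * t' := by
    refine pos_of_mul_pos_right (a := (1 - l) * (1 - m)) ?_
      (mul_nonneg (by linarith) (by linarith))
    rw [show (1 - l) * (1 - m) * (t * t') = ((1 - m) * t') * ((1 - m) * t') by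
      linear_combination ((1 - m) * t') * h₂]
    exact mul_self_pos.2 (mul_ne_zero (by linarith) ht')
  rw [mul_eq_mul_iff_abs_of_mul_pos hss'] at h₁
  rw [mul_eq_mul_iff_abs_of_mul_pos htt'] at h₂
  have hord := hord hss' htt'
  rcases lt_trichotomy |s| |s'| with h | h | h
  · exact (lt_of_lt_of_mul_eq_mul hl₀ hm₁ (abs_nonneg s) (abs_pos.2 ht) h₁ h₂ h).not_gt (hord.1 h)
  · exact hss (eq_of_abs_eq_of_mul_pos hss' h)
  · exact lt_asymm h
      (hord.2 (lt_of_lt_of_mul_eq_mul hm₀ hl₁ (abs_nonneg s') (abs_pos.2 ht') h₁.symm h₂.symm h))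

theorem segmentsMeet_of_not_noncrossing {s t s' t' : ℝ} (h : ¬ Noncrossing (s, t) (s', t')) :
    SegmentsMeet (s, t) (s', t') := by
  by_cases hss : s = s'
  · exact ⟨1, by simp, 1, by simp, by simp [hss], by simp⟩
  by_cases htt : t = t'
  · exact ⟨0, by simp, 0, by simp, by simp, by simp [htt]⟩
  obtain ⟨hss', htt', hord⟩ : 0 < s * s' ∧ 0 < t * t' ∧ ¬ (|s| < |s'| ↔ |t| < |t'|) := by
    simpa [Noncrossing, hss, htt] using h
  have hne : |t| ≠ |t'| := fun he => htt (eq_of_abs_eq_of_mul_pos htt' he)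
  rcases lt_or_gt_of_ne fun he => hss (eq_of_abs_eq_of_mul_pos hss' he) with h | h
  · exact segmentsMeet_of_abs_lt hss' htt' h
      (lt_of_le_of_ne (not_lt.1 fun h' => hord (iff_of_true h h')) hne.symm)
  · refine (segmentsMeet_of_abs_lt (by rwa [mul_comm]) (by rwa [mul_comm]) h ?_).symm
    exact lt_of_le_of_ne (not_lt.1 fun h' => hord (iff_of_false h.not_gt h'.not_gt)) hne

theorem noncrossing_of_abs_le {s t s' t' : ℝ} (hs : s ≠ s') (ht : t ≠ t') (hs' : |s'| ≤ |s|)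
    (ht' : |t'| ≤ |t|) : Noncrossing (s, t) (s', t') :=
  ⟨hs, ht, fun _ _ => iff_of_false hs'.not_gt ht'.not_gt⟩

theorem Noncrossing.exchange {s t s₁ t₁ s₂ t₂ : ℝ} (h₁ : Noncrossing (s, t) (s₁, t₁))
    (h₂ : Noncrossing (s, t) (s₂, t₂)) (hs₁₂ : 0 < s₁ * s₂) (hlt : |s₁| < |s₂|)
    (hgap : ¬ (0 < s * s₁ ∧ |s₁| < |s| ∧ |s| < |s₂|)) :
    Noncrossing (s, t) (s₂, t₁) ∧ Noncrossing (s, t) (s₁, t₂) := by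
  have hside : 0 < s * s₁ ↔ 0 < s * s₂ := by
    constructor <;> intro h <;> nlinarith [mul_pos h hs₁₂, sq_nonneg s₁, sq_nonneg s₂]
  have key : 0 < s * s₁ → (|s| < |s₁| ↔ |s| < |s₂|) := fun h =>
    ⟨fun h' => h'.trans hlt, fun h' => lt_of_le_of_ne (not_lt.1 fun h'' => hgap ⟨h, h'', h'⟩)
      fun he => h₁.1 (eq_of_abs_eq_of_mul_pos h he)⟩
  exact ⟨⟨h₂.1, h₁.2.1, fun hs ht => (key (hside.2 hs)).symm.trans (h₁.2.2 (hside.2 hs) ht)⟩,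
    ⟨h₁.1, h₂.2.1, fun hs ht => (key hs).trans (h₂.2.2 (hside.1 hs) ht)⟩⟩

/-- Law of cosines for the edge with coordinates `e`, where `c = ⟪u, v⟫`. -/
def sqLen (c : ℝ) (e : ℝ × ℝ) : ℝ := e.1 ^ 2 + e.2 ^ 2 - 2 * c * (e.1 * e.2)

theorem sqLen_of_pos {c s t : ℝ} (h : 0 < s * t * c) : sqLen c (s, t) = sqLen |c| (|s|, |t|) := by
  have : |c| * (|s| * |t|) = c * (s * t) := by
    rw [← abs_mul, ← abs_mul, abs_of_pos (by linarith)]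
  simp only [sqLen, sq_abs]
  linear_combination 2 * this

theorem sqLen_of_neg {c s t : ℝ} (h : s * t * c < 0) :
    sqLen c (s, t) = sqLen (-|c|) (|s|, |t|) := by
  have : |c| * (|s| * |t|) = -(c * (s * t)) := by
    rw [← abs_mul, ← abs_mul, abs_of_neg (by linarith)]
  simp only [sqLen, sq_abs]
  linear_combination -2 * this

/-- According as `d₁ ≤ 2 g a₂`, or `a₁ + a₂ ≤ 2 g d₁`, or neither, the left side is at most
`a₂ ^ 2`, the first edge, or the third edge. -/
theorem sqLen_exchange_le_max {g a₁ a₂ a₃ d₁ d₃ : ℝ} (hg₁ : g < 1) (ha₁₂ : a₁ < a₂)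
    (ha₂₃ : a₂ < a₃) (hd₁ : 0 < d₁) (hd₁₃ : d₁ < d₃) :
    sqLen g (a₂, d₁) ≤ max (sqLen g (a₁, d₁)) (max (a₂ ^ 2) (sqLen g (a₃, d₃))) := by
  simp only [sqLen]
  rcases le_or_gt d₁ (2 * g * a₂) with hc | hc
  · apply le_max_of_le_right (le_max_of_le_left _)
    nlinarith [mul_le_mul_of_nonneg_left hc hd₁.le]
  rcases le_or_gt (a₁ + a₂) (2 * g * d₁) with hc₂ | hc₂
  · apply le_max_of_le_left
    nlinarith [mul_le_mul_of_nonneg_left hc₂ (by linarith : (0 : ℝ) ≤ a₂ - a₁)]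
  · apply le_max_of_le_right (le_max_of_le_right _)
    have k₁ : 0 < (a₃ - a₂) * (2 * a₂ - 2 * g * d₁) := mul_pos (by linarith) (by linarith)
    have k₂ : 0 < (d₃ - d₁) * (2 * d₁ - 2 * g * a₂) := mul_pos (by linarith) (by nlinarith)
    have k₃ : 0 < (1 - g) * ((a₃ - a₂) * (d₃ - d₁)) :=
      mul_pos (by linarith) (mul_pos (by linarith) (by linarith))
    nlinarith [sq_nonneg (a₃ - a₂ - (d₃ - d₁))]

theorem sqLen_exchange {c s₁ t₁ s₂ t₂ s₃ t₃ : ℝ} (hc : |c| < 1) (hs₁₂ : 0 < s₁ * s₂)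
    (hlt₁₂ : |s₁| < |s₂|) (hlt₂₃ : |s₂| < |s₃|) (ht₁₃ : |t₁| < |t₃|)
    (hsmall₁ : 0 < s₁ * t₁ * c) (hbig₂ : s₂ * t₂ * c < 0) (hsmall₃ : 0 < s₃ * t₃ * c) :
    sqLen c (s₂, t₁) ≤ max (sqLen c (s₁, t₁)) (max (sqLen c (s₂, t₂)) (sqLen c (s₃, t₃))) ∧
      sqLen c (s₁, t₂) ≤ sqLen c (s₂, t₂) ∧
      sqLen c (s₂, t₁) + sqLen c (s₁, t₂) < sqLen c (s₁, t₁) + sqLen c (s₂, t₂) := by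
  have hc₀ : 0 < |c| := abs_pos.2 (right_ne_zero_of_mul hsmall₁.ne')
  have hs₁ : 0 < |s₁| := abs_pos.2 (left_ne_zero_of_mul hs₁₂.ne')
  have ht₁ : 0 < |t₁| := abs_pos.2 (right_ne_zero_of_mul (left_ne_zero_of_mul hsmall₁.ne'))
  have ht₂ : 0 < |t₂| := abs_pos.2 (right_ne_zero_of_mul (left_ne_zero_of_mul hbig₂.ne))
  have hsmall₂₁ : 0 < s₂ * t₁ * c := by nlinarith [mul_pos hs₁₂ hsmall₁, sq_nonneg s₁]
  have hbig₁₂ : s₁ * t₂ * c < 0 := by nlinarith [mul_pos hs₁₂ (neg_pos.2 hbig₂), sq_nonneg s₂]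
  rw [sqLen_of_pos hsmall₁, sqLen_of_neg hbig₂, sqLen_of_pos hsmall₃, sqLen_of_pos hsmall₂₁,
    sqLen_of_neg hbig₁₂]
  refine ⟨(sqLen_exchange_le_max hc hlt₁₂ hlt₂₃ ht₁ ht₁₃).trans
      (max_le_max le_rfl (max_le_max ?_ le_rfl)), ?_, ?_⟩ <;> simp only [sqLen]
  · nlinarith [mul_pos (mul_pos hc₀ (hs₁.trans hlt₁₂)) ht₂]
  · nlinarith [mul_le_mul_of_nonneg_left hlt₁₂.le (mul_pos hc₀ ht₂).le]
  · nlinarith [mul_pos hc₀ (mul_pos (sub_pos.2 hlt₁₂) (add_pos ht₁ ht₂))]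

section Plane

variable {x u v : Pt}

theorem eq_zero_of_smul_add_smul_eq_zero (hnp : det2 u v ≠ 0) {a b : ℝ} (h : a • u + b • v = 0) :
    a = 0 ∧ b = 0 := by
  have h₀ : a * u 0 + b * v 0 = 0 := by simpa using congrArg (· 0) h
  have h₁ : a * u 1 + b * v 1 = 0 := by simpa using congrArg (· 1) h
  have ha : a * det2 u v = 0 := by unfold det2; linear_combination v 1 * h₀ - v 0 * h₁
  have hb : b * det2 u v = 0 := by unfold det2; linear_combination u 0 * h₁ - u 1 * h₀
  exact ⟨(mul_eq_zero.1 ha).resolve_right hnp, (mul_eq_zero.1 hb).resolve_right hnp⟩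

theorem add_smul_add_smul_inj (hnp : det2 u v ≠ 0) {a b a' b' : ℝ} :
    x + a • u + b • v = x + a' • u + b' • v ↔ a = a' ∧ b = b' := by
  refine ⟨fun h => ?_, fun h => by rw [h.1, h.2]⟩
  have := eq_zero_of_smul_add_smul_eq_zero hnp (a := a - a') (b := b - b') (by
    rw [sub_smul, sub_smul]; linear_combination (norm := module) h)
  constructor <;> linarith [this.1, this.2]

theorem add_smul_ne_add_smul (hnp : det2 u v ≠ 0) {s t : ℝ} (ht : t ≠ 0) :
    x + s • u ≠ x + t • v := fun h =>
  ht ((add_smul_add_smul_inj (x := x) hnp (a := s) (b := 0) (a' := 0) (b' := t)).1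
    (by simpa using h)).2.symm

theorem mem_segment_red_blue {y : Pt} {s t : ℝ} :
    y ∈ segment ℝ (x + t • v) (x + s • u) ↔
      ∃ l ∈ Set.Icc (0 : ℝ) 1, y = x + (l * s) • u + ((1 - l) * t) • v := by
  rw [segment_eq_image']
  refine exists_congr fun l => and_congr_right fun _ => ?_
  rw [eq_comm]
  constructor <;> intro h <;> rw [h] <;> module

theorem segment_inter_segment_eq_empty_iff (hnp : det2 u v ≠ 0) {s t s' t' : ℝ} (hs : s ≠ 0)
    (hs' : s' ≠ 0) (ht : t ≠ 0) (ht' : t' ≠ 0) :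
    segment ℝ (x + t • v) (x + s • u) ∩ segment ℝ (x + t' • v) (x + s' • u) = ∅ ↔
      Noncrossing (s, t) (s', t') := by
  have hmeet : (segment ℝ (x + t • v) (x + s • u) ∩ segment ℝ (x + t' • v) (x + s' • u)).Nonempty
      ↔ SegmentsMeet (s, t) (s', t') := by
    simp only [Set.Nonempty, Set.mem_inter_iff, mem_segment_red_blue]
    constructor
    · rintro ⟨y, ⟨l, hl, rfl⟩, m, hm, he⟩
      exact ⟨l, hl, m, hm, (add_smul_add_smul_inj hnp).1 he⟩
    · rintro ⟨l, hl, m, hm, h₁, h₂⟩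
      exact ⟨_, ⟨l, hl, rfl⟩, m, hm, by rw [h₁, h₂]⟩
  rw [← Set.not_nonempty_iff_eq_empty, hmeet]
  exact ⟨fun h => by_contra fun h' => h (segmentsMeet_of_not_noncrossing h'),
    Noncrossing.not_segmentsMeet hs hs' ht ht'⟩

theorem dist_sq_eq_sqLen (hu : ‖u‖ = 1) (hv : ‖v‖ = 1) (s t : ℝ) :
    dist (x + t • v) (x + s • u) ^ 2 = sqLen ⟪u, v⟫_ℝ (s, t) := by
  rw [dist_eq_norm, show x + t • v - (x + s • u) = t • v - s • u by abel,
    ← real_inner_self_eq_norm_sq]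
  simp only [inner_sub_left, inner_sub_right, real_inner_smul_left, real_inner_smul_right]
  rw [real_inner_self_eq_norm_sq, real_inner_self_eq_norm_sq, hu, hv, real_inner_comm u v, sqLen]
  ring

theorem abs_inner_lt_one (hu : ‖u‖ = 1) (hv : ‖v‖ = 1) (hnp : det2 u v ≠ 0) :
    |⟪u, v⟫_ℝ| < 1 := by
  refine ((abs_real_inner_le_norm u v).trans_eq (by rw [hu, hv, one_mul])).lt_of_ne fun h => ?_
  obtain ⟨-, r, -, rfl⟩ := (abs_real_inner_div_norm_mul_norm_eq_one_iff u v).1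
    (by rw [hu, hv, mul_one, div_one, h])
  exact hnp (by simp [det2]; ring)

theorem inner_add_smul_sub_self (hu : ‖u‖ = 1) (x : Pt) (t : ℝ) : ⟪x + t • u - x, u⟫_ℝ = t := by
  rw [add_sub_cancel_left, real_inner_smul_left, real_inner_self_eq_norm_sq, hu]
  ring

theorem add_smul_mem_halfLine_iff (hu : u ≠ 0) {ε s : ℝ} (hε : ε ≠ 0) :
    x + s • u ∈ halfLine x (ε • u) ↔ 0 < ε * s := by
  simp only [halfLine, Set.mem_ofPred_eq, add_right_inj, smul_smul,
    smul_left_injective ℝ hu |>.eq_iff]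
  constructor
  · rintro ⟨l, hl, rfl⟩
    nlinarith [mul_pos hl (mul_self_pos.2 hε)]
  · intro h
    refine ⟨s / ε, ?_, by field_simp⟩
    rw [div_pos_iff]
    rcases mul_pos_iff.1 h with h | h
    · exact .inl h.symm
    · exact .inr h.symm

theorem add_smul_notMem_halfLine (hnp : det2 u v ≠ 0) {ε t : ℝ} (ht : t ≠ 0) :
    x + t • v ∉ halfLine x (ε • u) := by
  rintro ⟨l, -, he⟩
  rw [smul_smul] at he
  exact add_smul_ne_add_smul hnp ht he.symm

theorem inSmallSector_add_smul_iff (hnp : det2 u v ≠ 0) {s t : ℝ} (hs : s ≠ 0) (ht : t ≠ 0) :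
    InSmallSector x u v (x + s • u) (x + t • v) ↔ 0 < s * t * ⟪u, v⟫_ℝ := by
  have hu : u ≠ 0 := by rintro rfl; simp [det2] at hnp
  have hv : v ≠ 0 := by rintro rfl; simp [det2] at hnp
  have hunit : ∀ {ε : ℝ}, (ε = 1 ∨ ε = -1) → ε ≠ 0 := by rintro ε (rfl | rfl) <;> norm_num
  have hsign : ∀ {r : ℝ}, r ≠ 0 → ∃ ε : ℝ, (ε = 1 ∨ ε = -1) ∧ 0 < ε * r := fun hr =>
    hr.lt_or_gt.elim (fun h => ⟨-1, .inr rfl, by linarith⟩) fun h => ⟨1, .inl rfl, by linarith⟩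
  have key : ∀ {ε δ : ℝ}, (ε = 1 ∨ ε = -1) → (δ = 1 ∨ δ = -1) →
      s * t * ⟪u, v⟫_ℝ = (ε * s) * (δ * t) * ⟪ε • u, δ • v⟫_ℝ := by
    rintro ε δ (rfl | rfl) (rfl | rfl) <;> simp
  constructor
  · rintro ⟨ε, δ, hε, hδ, hc, hb, hr⟩
    rw [add_smul_mem_halfLine_iff hu (hunit hε)] at hb
    rw [add_smul_mem_halfLine_iff hv (hunit hδ)] at hr
    rw [key hε hδ]
    positivity
  · intro h
    obtain ⟨ε, hε, hb⟩ := hsign hs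
    obtain ⟨δ, hδ, hr⟩ := hsign ht
    rw [key hε hδ] at h
    exact ⟨ε, δ, hε, hδ, pos_of_mul_pos_right h (by positivity),
      (add_smul_mem_halfLine_iff hu (hunit hε)).2 hb,
      (add_smul_mem_halfLine_iff hv (hunit hδ)).2 hr⟩

theorem inSmallSector_comm {b r : Pt} : InSmallSector x v u r b ↔ InSmallSector x u v b r := by
  constructor <;> rintro ⟨ε, δ, hε, hδ, hc, h₁, h₂⟩ <;>
    exact ⟨δ, ε, hδ, hε, by rwa [real_inner_comm], h₂, h₁⟩

end Plane

structure DoublyCollinear (x u v : Pt) (B R : Finset Pt) : Prop where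
  norm_u : ‖u‖ = 1
  norm_v : ‖v‖ = 1
  det2_ne_zero : det2 u v ≠ 0
  blue : ∀ b ∈ B, ∃ t : ℝ, t ≠ 0 ∧ b = x + t • u
  red : ∀ r ∈ R, ∃ t : ℝ, t ≠ 0 ∧ r = x + t • v

/-- For unit `u`, `v` and points on the two lines, `σ r = x + s • u` and `r = x + t • v`. -/
def edgeCoords (x u v : Pt) (σ : Pt → Pt) (r : Pt) : ℝ × ℝ := (⟪σ r - x, u⟫_ℝ, ⟪r - x, v⟫_ℝ)

namespace DoublyCollinear

variable {x u v : Pt} {B R : Finset Pt} {σ : Pt → Pt}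

theorem symm (hP : DoublyCollinear x u v B R) : DoublyCollinear x v u R B :=
  ⟨hP.norm_v, hP.norm_u, fun h => hP.det2_ne_zero (by unfold det2 at h ⊢; linarith), hP.red,
    hP.blue⟩

theorem mono {B' R' : Finset Pt} (hP : DoublyCollinear x u v B R) (hB : B' ⊆ B) (hR : R' ⊆ R) :
    DoublyCollinear x u v B' R' :=
  ⟨hP.norm_u, hP.norm_v, hP.det2_ne_zero, fun b hb => hP.blue b (hB hb),
    fun r hr => hP.red r (hR hr)⟩

theorem eq_add_inner_smul (hP : DoublyCollinear x u v B R) {b : Pt} (hb : b ∈ B) :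
    b = x + ⟪b - x, u⟫_ℝ • u := by
  obtain ⟨t, -, rfl⟩ := hP.blue b hb
  rw [inner_add_smul_sub_self hP.norm_u]

theorem edgeCoords_spec (hP : DoublyCollinear x u v B R) (hσ : Set.MapsTo σ R B) {r : Pt}
    (hr : r ∈ R) {s t : ℝ} (he : edgeCoords x u v σ r = (s, t)) :
    s ≠ 0 ∧ t ≠ 0 ∧ σ r = x + s • u ∧ r = x + t • v := by
  obtain ⟨s', hs', hb⟩ := hP.blue _ (hσ hr)
  obtain ⟨t', ht', hr'⟩ := hP.red r hr
  rw [edgeCoords, hb, hr', inner_add_smul_sub_self hP.norm_u, inner_add_smul_sub_self hP.norm_v,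
    Prod.mk.injEq] at he
  obtain ⟨rfl, rfl⟩ := he
  exact ⟨hs', ht', hb, hr'⟩

theorem isBM_iff (hP : DoublyCollinear x u v B R) (hσ : Set.BijOn σ R B) :
    IsBM B R σ ↔ (R : Set Pt).Pairwise (Noncrossing on edgeCoords x u v σ) := by
  refine (and_iff_right hσ).trans (forall₂_congr fun r hr => forall₂_congr fun r' hr' =>
    imp_congr_right fun _ => ?_)
  obtain ⟨s, t, he⟩ : ∃ s t, edgeCoords x u v σ r = (s, t) := ⟨_, _, rfl⟩
  obtain ⟨s', t', he'⟩ : ∃ s t, edgeCoords x u v σ r' = (s, t) := ⟨_, _, rfl⟩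
  obtain ⟨hs, ht, hb, rfl⟩ := hP.edgeCoords_spec hσ.mapsTo hr he
  obtain ⟨hs', ht', hb', rfl⟩ := hP.edgeCoords_spec hσ.mapsTo hr' he'
  rw [onFun, he, he', hb, hb']
  exact segment_inter_segment_eq_empty_iff hP.det2_ne_zero hs hs' ht ht'

theorem exists_isBM (hP : DoublyCollinear x u v B R) (hcard : B.card = R.card) :
    ∃ σ, IsBM B R σ := by
  classical
  induction hn : R.card generalizing B R with
  | zero =>
    obtain rfl := Finset.card_eq_zero.1 hn
    obtain rfl := Finset.card_eq_zero.1 (hcard.trans hn)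
    exact ⟨id, by simp, by simp⟩
  | succ n ih =>
    -- match the red point farthest from `x` with the blue point farthest from `x`
    obtain ⟨r₀, hr₀, hr₀max⟩ := R.exists_max_image (fun r => |⟪r - x, v⟫_ℝ|)
      (Finset.card_pos.1 (by omega))
    obtain ⟨b₀, hb₀, hb₀max⟩ := B.exists_max_image (fun b => |⟪b - x, u⟫_ℝ|)
      (Finset.card_pos.1 (by omega))
    have hP' := hP.mono (B.erase_subset b₀) (R.erase_subset r₀)
    obtain ⟨σ, hσ⟩ := ih hP'
      (by rw [Finset.card_erase_of_mem hb₀, Finset.card_erase_of_mem hr₀, hcard])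
      (by rw [Finset.card_erase_of_mem hr₀, hn]; rfl)
    set σ₁ := Function.update σ r₀ b₀
    have heq : ∀ r ∈ R.erase r₀, σ₁ r = σ r := fun r hr =>
      Function.update_of_ne (Finset.ne_of_mem_erase hr) _ _
    have hbij : Set.BijOn σ₁ R B := by
      have := (hσ.1.congr fun r hr => (heq r hr).symm).insert (a := r₀) (by simp [σ₁])
      simpa [σ₁, Set.insert_eq_of_mem, hr₀, hb₀] using this
    refine ⟨σ₁, (hP.isBM_iff hbij).2 ?_⟩
    rw [← Finset.insert_erase hr₀, Finset.coe_insert, Set.pairwise_insert]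
    refine ⟨fun r hr r' hr' hne => ?_, fun r hr hne => ?_⟩
    · simpa only [onFun, edgeCoords, heq r hr, heq r' hr'] using (hP'.isBM_iff hσ.1).1 hσ hr hr' hne
    have hrR : r ∈ R := Finset.mem_of_mem_erase hr
    have hb : σ r ∈ B.erase b₀ := hσ.1.mapsTo hr
    have hσ₁ : σ₁ r₀ = b₀ := Function.update_self _ _ _
    have h : Noncrossing (edgeCoords x u v σ₁ r₀) (edgeCoords x u v σ₁ r) := by
      simp only [edgeCoords, heq r hr, hσ₁]
      refine noncrossing_of_abs_le (fun h => Finset.ne_of_mem_erase hb ?_) (fun h => hne ?_)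
        (hb₀max _ (Finset.mem_of_mem_erase hb)) (hr₀max r hrR)
      · rw [hP.eq_add_inner_smul (Finset.mem_of_mem_erase hb), ← h, ← hP.eq_add_inner_smul hb₀]
      · rw [hP.symm.eq_add_inner_smul hr₀, h, ← hP.symm.eq_add_inner_smul hrR]
    exact ⟨h, h.symm⟩

theorem matchedSmall_apply_iff (hP : DoublyCollinear x u v B R) (hσ : IsBM B R σ) {r : Pt}
    (hr : r ∈ R) :
    MatchedSmall x u v R σ (σ r) ↔
      0 < (edgeCoords x u v σ r).1 * (edgeCoords x u v σ r).2 * ⟪u, v⟫_ℝ := by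
  obtain ⟨hs, ht, hb, hr'⟩ := hP.edgeCoords_spec hσ.1.mapsTo hr Prod.mk.eta.symm
  rw [← inSmallSector_add_smul_iff hP.det2_ne_zero hs ht, ← hb, ← hr']
  refine ⟨?_, fun h => ⟨r, hr, .inr rfl, h⟩⟩
  rintro ⟨r', hr'R, h | h, hsec⟩
  · obtain ⟨-, ht', -, hr''⟩ := hP.edgeCoords_spec hσ.1.mapsTo hr'R Prod.mk.eta.symm
    exact absurd (hb ▸ hr'' ▸ h) (add_smul_ne_add_smul hP.det2_ne_zero ht')
  · rwa [hσ.1.injOn hr hr'R h]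

theorem exists_eq_apply_of_mem_halfLine (hP : DoublyCollinear x u v B R) (hσ : Set.BijOn σ R B)
    {ε : ℝ} (hε : ε ≠ 0) {p : Pt} (hp : p ∈ (↑B ∪ ↑R : Set Pt) ∩ halfLine x (ε • u)) :
    ∃ r ∈ R, p = σ r ∧ 0 < ε * (edgeCoords x u v σ r).1 := by
  obtain ⟨hp | hp, hph⟩ := hp
  · obtain ⟨r, hr, rfl⟩ := hσ.surjOn hp
    refine ⟨r, hr, rfl, (add_smul_mem_halfLine_iff (x := x) (u := u) ?_ hε).1 ?_⟩
    · exact norm_ne_zero_iff.1 (by rw [hP.norm_u]; norm_num)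
    · rwa [← (hP.edgeCoords_spec hσ.mapsTo hr Prod.mk.eta.symm).2.2.1]
  · obtain ⟨t, ht, rfl⟩ := hP.red p hp
    exact absurd hph (add_smul_notMem_halfLine hP.det2_ne_zero ht)

theorem abs_lt_of_dist_le (hP : DoublyCollinear x u v B R) (hσ : Set.BijOn σ R B) {r r' : Pt}
    (hr : r ∈ R) (hr' : r' ∈ R) (hpos : 0 < (edgeCoords x u v σ r).1 * (edgeCoords x u v σ r').1)
    (hle : dist x (σ r) ≤ dist x (σ r')) (hne : r ≠ r') :
    |(edgeCoords x u v σ r).1| < |(edgeCoords x u v σ r').1| := by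
  obtain ⟨-, -, hb, -⟩ := hP.edgeCoords_spec hσ.mapsTo hr Prod.mk.eta.symm
  obtain ⟨-, -, hb', -⟩ := hP.edgeCoords_spec hσ.mapsTo hr' Prod.mk.eta.symm
  rw [hb, hb', dist_eq_norm', dist_eq_norm', add_sub_cancel_left, add_sub_cancel_left, norm_smul,
    norm_smul, hP.norm_u, mul_one, mul_one, Real.norm_eq_abs, Real.norm_eq_abs] at hle
  refine hle.lt_of_ne fun habs => hne (hσ.injOn hr hr' ?_)
  rw [hb, hb', eq_of_abs_eq_of_mul_pos hpos habs]

theorem isBM_comp_swap (hP : DoublyCollinear x u v B R) (hσ : IsBM B R σ) {r₁ r₂ : Pt}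
    (hr₁ : r₁ ∈ R) (hr₂ : r₂ ∈ R) {s₁ t₁ s₂ t₂ : ℝ}
    (he₁ : edgeCoords x u v σ r₁ = (s₁, t₁)) (he₂ : edgeCoords x u v σ r₂ = (s₂, t₂))
    (hs₁₂ : 0 < s₁ * s₂) (hlt₁₂ : |s₁| < |s₂|) (ht₁₂ : t₁ * t₂ < 0)
    (hgap : ∀ r ∈ R, ∀ s t, edgeCoords x u v σ r = (s, t) →
      ¬ (0 < s * s₁ ∧ |s₁| < |s| ∧ |s| < |s₂|)) :
    IsBM B R (σ ∘ Equiv.swap r₁ r₂) := by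
  have hnc := (hP.isBM_iff hσ.1).1 hσ
  have he' : ∀ k, k ≠ r₁ → k ≠ r₂ →
      edgeCoords x u v (σ ∘ Equiv.swap r₁ r₂) k = edgeCoords x u v σ k :=
    fun k h₁ h₂ => by simp [edgeCoords, Equiv.swap_apply_of_ne_of_ne h₁ h₂]
  have he'₁ : edgeCoords x u v (σ ∘ Equiv.swap r₁ r₂) r₁ = (s₂, t₁) := by
    simp only [edgeCoords, Function.comp_apply, Equiv.swap_apply_left, Prod.mk.injEq]
    exact ⟨congrArg Prod.fst he₂, congrArg Prod.snd he₁⟩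
  have he'₂ : edgeCoords x u v (σ ∘ Equiv.swap r₁ r₂) r₂ = (s₁, t₂) := by
    simp only [edgeCoords, Function.comp_apply, Equiv.swap_apply_right, Prod.mk.injEq]
    exact ⟨congrArg Prod.fst he₁, congrArg Prod.snd he₂⟩
  refine (hP.isBM_iff (hσ.1.comp (Equiv.swap_bijOn_self (by simp [hr₁, hr₂])))).2
    (hnc.of_eq_off_pair (fun _ _ h => h.symm) he' ?_ ?_ ?_)
  · rw [he'₁, he'₂]
    refine ⟨fun h => hlt₁₂.ne' (congrArg abs h), fun h => ?_, fun _ h => by linarith⟩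
    dsimp only at h
    rw [h] at ht₁₂
    linarith [mul_self_nonneg t₂]
  all_goals
    intro k hk hk₁ hk₂
    obtain ⟨s, t, he⟩ : ∃ s t, edgeCoords x u v σ k = (s, t) := ⟨_, _, rfl⟩
    have h₁ := hnc hk hr₁ hk₁
    have h₂ := hnc hk hr₂ hk₂
    rw [onFun, he, he₁] at h₁
    rw [onFun, he, he₂] at h₂
    have := h₁.exchange h₂ hs₁₂ hlt₁₂ (hgap k hk s t he)
  · rw [he'₁, he]; exact this.1.symm
  · rw [he'₂, he]; exact this.2.symm

end DoublyCollinear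

def cost (R : Finset Pt) (hR : R.Nonempty) (σ : Pt → Pt) : ℝ ×ₗ ℝ :=
  toLex (R.sup' hR fun r => dist r (σ r), ∑ r ∈ R, dist r (σ r) ^ 2)

def IsOptimal (B R : Finset Pt) (hR : R.Nonempty) (σ : Pt → Pt) : Prop :=
  IsBM B R σ ∧ ∀ σ', IsBM B R σ' → cost R hR σ ≤ cost R hR σ'

theorem IsOptimal.sup'_le {B R : Finset Pt} {hR : R.Nonempty} {σ σ' : Pt → Pt}
    (hσ : IsOptimal B R hR σ) (hσ' : IsBM B R σ') :
    R.sup' hR (fun r => dist r (σ r)) ≤ R.sup' hR (fun r => dist r (σ' r)) :=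
  Prod.Lex.monotone_fst _ _ (hσ.2 σ' hσ')

theorem exists_isOptimal {B R : Finset Pt} (hR : R.Nonempty) (h : ∃ σ, IsBM B R σ) :
    ∃ σ, IsOptimal B R hR σ := by
  classical
  have hfin : (cost R hR '' {σ | IsBM B R σ}).Finite := by
    let extend : (R → B) → Pt → Pt := fun g p => if hp : p ∈ R then g ⟨p, hp⟩ else p
    refine (Set.finite_range fun g => cost R hR (extend g)).subset ?_
    rintro _ ⟨σ, hσ, rfl⟩
    refine ⟨fun r => ⟨σ r, hσ.1.mapsTo r.2⟩, ?_⟩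
    have : ∀ r ∈ R, extend (fun r => ⟨σ r, hσ.1.mapsTo r.2⟩) r = σ r := fun r hr => by
      simp [extend, hr]
    simp only [cost]
    rw [Finset.sup'_congr hR rfl fun r hr => congrArg (dist r) (this r hr),
      Finset.sum_congr rfl fun r hr => congrArg (dist r · ^ 2) (this r hr)]
  obtain ⟨σ₀, hσ₀⟩ := h
  obtain ⟨_, ⟨σ, hσ, rfl⟩, hmin⟩ := Set.exists_min_image _ id hfin ⟨_, σ₀, hσ₀, rfl⟩
  exact ⟨σ, hσ, fun σ' hσ' => hmin _ ⟨σ', hσ', rfl⟩⟩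

theorem cost_comp_swap_lt {R : Finset Pt} (hR : R.Nonempty) {σ : Pt → Pt} {r₁ r₂ : Pt}
    (h₁ : r₁ ∈ R) (h₂ : r₂ ∈ R) (hne : r₁ ≠ r₂)
    (hle₁ : dist r₁ (σ r₂) ≤ R.sup' hR fun r => dist r (σ r))
    (hle₂ : dist r₂ (σ r₁) ≤ R.sup' hR fun r => dist r (σ r))
    (hlt : dist r₁ (σ r₂) ^ 2 + dist r₂ (σ r₁) ^ 2 < dist r₁ (σ r₁) ^ 2 + dist r₂ (σ r₂) ^ 2) :
    cost R hR (σ ∘ Equiv.swap r₁ r₂) < cost R hR σ := by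
  refine Prod.Lex.toLex_strictMono
    (Prod.mk_lt_mk_of_le_of_lt (Finset.sup'_le _ _ fun r hr => ?_) ?_)
  · rcases eq_or_ne r r₁ with rfl | hr₁
    · simpa using hle₁
    rcases eq_or_ne r r₂ with rfl | hr₂
    · simpa using hle₂
    rw [Function.comp_apply, Equiv.swap_apply_of_ne_of_ne hr₁ hr₂]
    exact Finset.le_sup' (fun r => dist r (σ r)) hr
  · have hsplit : ∀ f : Pt → ℝ, ∑ r ∈ R, f r = f r₁ + f r₂ + ∑ r ∈ (R.erase r₁).erase r₂, f r :=
      fun f => by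
        rw [add_assoc, Finset.add_sum_erase _ _ (Finset.mem_erase.2 ⟨hne.symm, h₂⟩),
          Finset.add_sum_erase _ _ h₁]
    rw [hsplit, hsplit (fun r => dist r (σ r) ^ 2)]
    rw [Finset.sum_congr rfl fun r hr => by
      rw [Function.comp_apply, Equiv.swap_apply_of_ne_of_ne (Finset.ne_of_mem_erase
        (Finset.mem_of_mem_erase hr)) (Finset.ne_of_mem_erase hr)]]
    simp only [Function.comp_apply, Equiv.swap_apply_left, Equiv.swap_apply_right]
    linarith

section Exchange

variable {x u v : Pt} {B R : Finset Pt} {σ : Pt → Pt}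

theorem IsBM.exists_cost_lt_of_exchange (hP : DoublyCollinear x u v B R) (hσ : IsBM B R σ)
    (hR : R.Nonempty) {r₁ r₂ r₃ : Pt} (hr₁ : r₁ ∈ R) (hr₂ : r₂ ∈ R) (hr₃ : r₃ ∈ R)
    {s₁ t₁ s₂ t₂ s₃ t₃ : ℝ} (he₁ : edgeCoords x u v σ r₁ = (s₁, t₁))
    (he₂ : edgeCoords x u v σ r₂ = (s₂, t₂)) (he₃ : edgeCoords x u v σ r₃ = (s₃, t₃))
    (hs₁₂ : 0 < s₁ * s₂) (hs₁₃ : 0 < s₁ * s₃) (hlt₁₂ : |s₁| < |s₂|) (hlt₂₃ : |s₂| < |s₃|)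
    (hsmall₁ : 0 < s₁ * t₁ * ⟪u, v⟫_ℝ) (hbig₂ : s₂ * t₂ * ⟪u, v⟫_ℝ < 0)
    (hsmall₃ : 0 < s₃ * t₃ * ⟪u, v⟫_ℝ)
    (hgap : ∀ r ∈ R, ∀ s t, edgeCoords x u v σ r = (s, t) →
      ¬ (0 < s * s₁ ∧ |s₁| < |s| ∧ |s| < |s₂|)) :
    ∃ σ', IsBM B R σ' ∧ cost R hR σ' < cost R hR σ := by
  set c := ⟪u, v⟫_ℝ
  have hne₁₂ : r₁ ≠ r₂ := by rintro rfl; rw [he₁, Prod.mk.injEq] at he₂; simp [he₂.1] at hlt₁₂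
  have hne₁₃ : r₁ ≠ r₃ := by
    rintro rfl; rw [he₁, Prod.mk.injEq] at he₃; simp [he₃.1] at hlt₁₂; linarith
  have ht₁₂ : t₁ * t₂ < 0 := by
    by_contra! h
    nlinarith [mul_neg_of_pos_of_neg hsmall₁ hbig₂, mul_nonneg (mul_nonneg hs₁₂.le h) (sq_nonneg c)]
  have ht₁₃ : 0 < t₁ * t₃ := by
    refine pos_of_mul_pos_left (b := s₁ * s₃ * c ^ 2) ?_ (by positivity)
    linarith [mul_pos hsmall₁ hsmall₃]
  have hlt₁₃ : |t₁| < |t₃| := by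
    have := (hP.isBM_iff hσ.1).1 hσ hr₁ hr₃ hne₁₃
    rw [onFun, he₁, he₃] at this
    exact (this.2.2 hs₁₃ ht₁₃).1 (hlt₁₂.trans hlt₂₃)
  obtain ⟨-, -, hb₁, hr₁'⟩ := hP.edgeCoords_spec hσ.1.mapsTo hr₁ he₁
  obtain ⟨-, -, hb₂, hr₂'⟩ := hP.edgeCoords_spec hσ.1.mapsTo hr₂ he₂
  obtain ⟨-, -, hb₃, hr₃'⟩ := hP.edgeCoords_spec hσ.1.mapsTo hr₃ he₃
  have hlen : ∀ {r r' : Pt} {s t : ℝ}, r = x + t • v → σ r' = x + s • u →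
      dist r (σ r') ^ 2 = sqLen c (s, t) := by
    intro r r' s t hr hb
    rw [hr, hb, dist_sq_eq_sqLen hP.norm_u hP.norm_v]
  obtain ⟨hmax, hle, hsum⟩ := sqLen_exchange (abs_inner_lt_one hP.norm_u hP.norm_v
    hP.det2_ne_zero) hs₁₂ hlt₁₂ hlt₂₃ hlt₁₃ hsmall₁ hbig₂ hsmall₃
  rw [← hlen hr₁' hb₂, ← hlen hr₁' hb₁, ← hlen hr₂' hb₂, ← hlen hr₃' hb₃] at hmax
  rw [← hlen hr₂' hb₁, ← hlen hr₂' hb₂] at hle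
  rw [← hlen hr₁' hb₂, ← hlen hr₂' hb₁, ← hlen hr₁' hb₁, ← hlen hr₂' hb₂] at hsum
  have hM : ∀ r ∈ R, dist r (σ r) ≤ R.sup' hR fun r => dist r (σ r) :=
    fun r hr => Finset.le_sup' (fun r => dist r (σ r)) hr
  have hM₀ := dist_nonneg.trans (hM r₁ hr₁)
  refine ⟨_, hP.isBM_comp_swap hσ hr₁ hr₂ he₁ he₂ hs₁₂ hlt₁₂ ht₁₂ hgap,
    cost_comp_swap_lt hR hr₁ hr₂ hne₁₂ ?_ ?_ hsum⟩
  · rw [← pow_le_pow_iff_left₀ dist_nonneg hM₀ two_ne_zero]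
    refine hmax.trans (max_le ?_ (max_le ?_ ?_)) <;>
      exact pow_le_pow_left₀ dist_nonneg (hM _ ‹_›) 2
  · exact ((pow_le_pow_iff_left₀ dist_nonneg dist_nonneg two_ne_zero).1 hle).trans (hM r₂ hr₂)

theorem IsOptimal.consecOn_blue {hR : R.Nonempty} (hP : DoublyCollinear x u v B R)
    (hσ : IsOptimal B R hR σ) {w : Pt} (hw : w = u ∨ w = -u) :
    ConsecOn x (↑B ∪ ↑R) (halfLine x w)
      {p | p ∈ (↑B ∪ ↑R : Set Pt) ∩ halfLine x w ∧ MatchedSmall x u v R σ p} := by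
  obtain ⟨ε, hε, rfl⟩ : ∃ ε : ℝ, (ε = 1 ∨ ε = -1) ∧ w = ε • u :=
    hw.elim (fun h => ⟨1, .inl rfl, by rw [h, one_smul]⟩)
      fun h => ⟨-1, .inr rfl, by rw [h, neg_one_smul]⟩
  have hε₀ : ε ≠ 0 := by rcases hε with rfl | rfl <;> norm_num
  have hside : ∀ {a b : ℝ}, 0 < ε * a → (0 < ε * b ↔ 0 < a * b) := fun {a b} ha => by
    rcases hε with rfl | rfl <;> constructor <;> intro h <;> nlinarith
  rintro a ⟨ha, haM⟩ c ⟨hc, hcM⟩ p hp hap hpc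
  refine ⟨hp, ?_⟩
  by_contra hpM
  obtain ⟨ra, hra, rfl, hεa⟩ := hP.exists_eq_apply_of_mem_halfLine hσ.1.1 hε₀ ha
  obtain ⟨rc, hrc, rfl, hεc⟩ := hP.exists_eq_apply_of_mem_halfLine hσ.1.1 hε₀ hc
  obtain ⟨rp, hrp, rfl, hεp⟩ := hP.exists_eq_apply_of_mem_halfLine hσ.1.1 hε₀ hp
  have hap' := hP.abs_lt_of_dist_le hσ.1.1 hra hrp ((hside hεa).1 hεp) hap
    (by rintro rfl; exact hpM haM)
  have hpc' := hP.abs_lt_of_dist_le hσ.1.1 hrp hrc ((hside hεp).1 hεc) hpc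
    (by rintro rfl; exact hpM hcM)
  rw [hP.matchedSmall_apply_iff hσ.1 hra] at haM
  rw [hP.matchedSmall_apply_iff hσ.1 hrc] at hcM
  rw [hP.matchedSmall_apply_iff hσ.1 hrp] at hpM
  obtain ⟨r₁, h₁, r₂, h₂, hsmall₁, hbig₂, h₁₂, h₂p, hadj⟩ :=
    (R.filter fun r => 0 < ε * (edgeCoords x u v σ r).1).exists_adjacent_change
      (fun r => |(edgeCoords x u v σ r).1|)
      (fun r => 0 < (edgeCoords x u v σ r).1 * (edgeCoords x u v σ r).2 * ⟪u, v⟫_ℝ)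
      (by simp [hra, hεa]) (by simp [hrp, hεp]) haM hpM hap'
  simp only [Finset.mem_filter] at h₁ h₂ hadj
  have hc₀ : ⟪u, v⟫_ℝ ≠ 0 := right_ne_zero_of_mul hsmall₁.ne'
  have hs₂ := hP.edgeCoords_spec hσ.1.1.mapsTo h₂.1 Prod.mk.eta.symm
  obtain ⟨σ', hσ', hcost⟩ := hσ.1.exists_cost_lt_of_exchange hP hR h₁.1 h₂.1 hrc rfl rfl rfl
    ((hside h₁.2).1 h₂.2) ((hside h₁.2).1 hεc) h₁₂ (h₂p.trans_lt hpc') hsmall₁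
    ((not_lt.1 hbig₂).lt_of_ne (mul_ne_zero (mul_ne_zero hs₂.1 hs₂.2.1) hc₀)) hcM
    fun r hr s t he ⟨hs, h₁s, hs₂⟩ => by
      obtain rfl : (edgeCoords x u v σ r).1 = s := congrArg Prod.fst he
      exact (hadj r ⟨hr, (hside h₁.2).2 (by rw [mul_comm]; exact hs)⟩ h₁s).not_gt hs₂
  exact (hσ.2 σ' hσ').not_gt hcost

end Exchange

section ColourSymmetry

variable {B R : Finset Pt} {σ : Pt → Pt}

theorem IsBM.invFunOn (hσ : IsBM B R σ) : IsBM R B (Function.invFunOn σ R) := by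
  have hinv := hσ.1.invOn_invFunOn
  refine ⟨hσ.1.symm hinv.symm, fun b hb b' hb' hne => ?_⟩
  have hτ := (hσ.1.symm hinv.symm).mapsTo
  have := hσ.2 _ (hτ hb) _ (hτ hb') fun h => hne (by rw [← hinv.2 hb, h, hinv.2 hb'])
  rwa [hinv.2 hb, hinv.2 hb', segment_symm, segment_symm ℝ _ b'] at this

theorem IsBM.cost_invFunOn (hσ : IsBM B R σ) (hR : R.Nonempty) (hB : B.Nonempty) :
    cost B hB (Function.invFunOn σ R) = cost R hR σ := by
  classical
  have hinv := hσ.1.invOn_invFunOn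
  obtain rfl : B = R.image σ := by rw [← Finset.coe_inj, Finset.coe_image, hσ.1.image_eq]
  simp only [cost, Finset.sup'_image, Finset.sum_image hσ.1.injOn, Function.comp_def]
  have h : ∀ r ∈ R, dist (σ r) (Function.invFunOn σ R (σ r)) = dist r (σ r) := fun r hr => by
    rw [hinv.1 hr, dist_comm]
  rw [Finset.sup'_congr _ rfl h, Finset.sum_congr rfl fun r hr => by rw [h r hr]]

theorem IsOptimal.invFunOn {hR : R.Nonempty} (hσ : IsOptimal B R hR σ) (hB : B.Nonempty) :
    IsOptimal R B hB (Function.invFunOn σ R) :=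
  ⟨hσ.1.invFunOn, fun τ hτ => by
    rw [hσ.1.cost_invFunOn hR hB, ← hτ.cost_invFunOn hB hR]
    exact hσ.2 _ hτ.invFunOn⟩

theorem IsBM.matchedSmall_invFunOn {x u v : Pt} (hσ : IsBM B R σ) {p : Pt} :
    MatchedSmall x v u B (Function.invFunOn σ R) p ↔ MatchedSmall x u v R σ p := by
  have hinv := hσ.1.invOn_invFunOn
  constructor
  · rintro ⟨b, hb, hp, hsec⟩
    refine ⟨_, (hσ.1.symm hinv.symm).mapsTo hb, ?_, ?_⟩ <;> rw [hinv.2 hb]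
    · exact hp.symm
    · exact inSmallSector_comm.1 hsec
  · rintro ⟨r, hr, hp, hsec⟩
    refine ⟨σ r, hσ.1.mapsTo hr, ?_, ?_⟩ <;> rw [hinv.1 hr]
    · exact hp.symm
    · exact inSmallSector_comm.2 hsec

theorem IsOptimal.consecOn_red {x u v : Pt} {hR : R.Nonempty} (hP : DoublyCollinear x u v B R)
    (hσ : IsOptimal B R hR σ) {w : Pt} (hw : w = v ∨ w = -v) :
    ConsecOn x (↑B ∪ ↑R) (halfLine x w)
      {p | p ∈ (↑B ∪ ↑R : Set Pt) ∩ halfLine x w ∧ MatchedSmall x u v R σ p} := by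
  have hB : B.Nonempty := let ⟨r, hr⟩ := hR; ⟨σ r, hσ.1.1.mapsTo hr⟩
  have := (hσ.invFunOn hB).consecOn_blue hP.symm hw
  simp_rw [Set.union_comm (R : Set Pt), hσ.1.matchedSmall_invFunOn] at this
  exact this

end ColourSymmetry

theorem dc_minmax_structured_optimum_general (n : ℕ)
    (x u v : Pt) (hu : ‖u‖ = 1) (hv : ‖v‖ = 1) (hnp : det2 u v ≠ 0) (B R : Finset Pt)
    (hB : ∀ b ∈ B, ∃ t : ℝ, t ≠ 0 ∧ b = x + t • u)
    (hR : ∀ r ∈ R, ∃ t : ℝ, t ≠ 0 ∧ r = x + t • v)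
    (hcB : B.card = n) (hcR : R.card = n) (hRne : R.Nonempty) :
    ∃ σ, IsBM B R σ ∧
      (∀ σ', IsBM B R σ' →
        R.sup' hRne (fun r => dist r (σ r)) ≤ R.sup' hRne (fun r => dist r (σ' r))) ∧
      (∀ w : Pt, (w = u ∨ w = -u ∨ w = v ∨ w = -v) →
        ConsecOn x (↑B ∪ ↑R) (halfLine x w)
          {p | p ∈ (↑B ∪ ↑R : Set Pt) ∩ halfLine x w ∧ MatchedSmall x u v R σ p}) := by
  have hP : DoublyCollinear x u v B R := ⟨hu, hv, hnp, hB, hR⟩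
  obtain ⟨σ, hσ⟩ := exists_isOptimal hRne (hP.exists_isBM (hcB.trans hcR.symm))
  refine ⟨σ, hσ.1, fun σ' hσ' => hσ.sup'_le hσ', fun w hw => ?_⟩
  rcases hw with hw | hw | hw | hw
  · exact hσ.consecOn_blue hP (.inl hw)
  · exact hσ.consecOn_blue hP (.inr hw)
  · exact hσ.consecOn_red hP (.inl hw)
  · exact hσ.consecOn_red hP (.inr hw)

/-- Let `P = B ∪ R` be a doubly collinear point set with `|B| = |R| = n ≥ 1`.
There exists a bichromatic perfect non-crossing matching minimizing the maximum edge length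
such that, for each of the four half-lines, the set of its points whose matching edge lies in a
small sector is consecutive in the ordering by distance to `x`. -/
theorem dc_minmax_structured_optimum (n : ℕ) (hn : 1 ≤ n)
    (x u v : Pt) (hu : ‖u‖ = 1) (hv : ‖v‖ = 1) (hnp : det2 u v ≠ 0) (B R : Finset Pt)
    (hB : ∀ b ∈ B, ∃ t : ℝ, t ≠ 0 ∧ b = x + t • u)
    (hR : ∀ r ∈ R, ∃ t : ℝ, t ≠ 0 ∧ r = x + t • v)
    (hcB : B.card = n) (hcR : R.card = n) (hRne : R.Nonempty) :
    ∃ σ, IsBM B R σ ∧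
      (∀ σ', IsBM B R σ' →
        R.sup' hRne (fun r => dist r (σ r)) ≤ R.sup' hRne (fun r => dist r (σ' r))) ∧
      (∀ w : Pt, (w = u ∨ w = -u ∨ w = v ∨ w = -v) →
        ConsecOn x (↑B ∪ ↑R) (halfLine x w)
          {p | p ∈ (↑B ∪ ↑R : Set Pt) ∩ halfLine x w ∧ MatchedSmall x u v R σ p}) :=
  dc_minmax_structured_optimum_general n x u v hu hv hnp B R hB hR hcB hcR hRne
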